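/- arXiv:1504.05982 — 3 statements merged into one kernel-verified Lean document; each statement's English description precedes it below -/
import Mathlib

section
/- Suppose a sequence of nonnegative reals n^0, n^1, n^2, … satisfies n^{m+1} ≤ (3/4)·N + (1/4)·n^m + Δt·n^m·G((n^m)^γ) where G is decreasing with G(P_M) = 0, N = n_∞ + 4Δt·sup_{s ≥ 0}(s^{1/γ}G(s)), n_∞ = P_M^{1/γ}, and n^0 ≤ N. Then n^m ≤ N for all m ≥ 0. -/
/-! The interval `[0, N]` is invariant under one step of the recursion. If `(n^m)^γ < P_M`, then
`n^m ≤ n_∞` and the reaction term `Δt n^m G((n^m)^γ)` is at most `Δt S`, so the right-hand side is at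
most `(3/4) N + (1/4) (n_∞ + 4 Δt S) = N`. Otherwise `G((n^m)^γ) ≤ G(P_M) = 0`, and the right-hand
side is at most `(3/4) N + (1/4) n^m ≤ N`. -/

theorem mul_apply_rpow_le_of_isLUB {G : ℝ → ℝ} {γ S x : ℝ} (hγ : γ ≠ 0)
    (hS : IsLUB ((fun s : ℝ => s ^ (1 / γ) * G s) '' Set.Ici 0) S) (hx : 0 ≤ x) :
    x * G (x ^ γ) ≤ S := by
  have hmem := Set.mem_image_of_mem (fun s : ℝ => s ^ (1 / γ) * G s)
    (Set.mem_Ici.mpr (Real.rpow_nonneg hx γ))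
  simpa only [one_div, Real.rpow_rpow_inv hx hγ] using hS.1 hmem

theorem recursion_step_le {G : ℝ → ℝ} (hGanti : Antitone G) {PM : ℝ} (hGPM : G PM = 0)
    {γ Δt S N x : ℝ} (hγ : 0 < γ) (hΔt : 0 ≤ Δt)
    (hS : IsLUB ((fun s : ℝ => s ^ (1 / γ) * G s) '' Set.Ici 0) S)
    (hN : N = PM ^ (1 / γ) + 4 * Δt * S) (hx : 0 ≤ x) (hxN : x ≤ N) :
    (3 / 4) * N + (1 / 4) * x + Δt * x * G (x ^ γ) ≤ N := by
  rcases lt_or_ge (x ^ γ) PM with hlt | hle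
  · have hx_le : x ≤ PM ^ (1 / γ) := by
      calc x = (x ^ γ) ^ (1 / γ) := by rw [one_div, Real.rpow_rpow_inv hx hγ.ne']
        _ ≤ PM ^ (1 / γ) :=
          Real.rpow_le_rpow (Real.rpow_nonneg hx γ) hlt.le (one_div_nonneg.mpr hγ.le)
    have hreact : Δt * (x * G (x ^ γ)) ≤ Δt * S :=
      mul_le_mul_of_nonneg_left (mul_apply_rpow_le_of_isLUB hγ.ne' hS hx) hΔt
    linarith
  · have hG : G (x ^ γ) ≤ 0 := hGPM ▸ hGanti hle
    have hreact : Δt * x * G (x ^ γ) ≤ 0 :=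
      mul_nonpos_of_nonneg_of_nonpos (mul_nonneg hΔt hx) hG
    linarith

theorem stmt7_general (G : ℝ → ℝ) (hGanti : Antitone G)
    (PM : ℝ) (hGPM : G PM = 0)
    (γ Δt : ℝ) (hγ : 1 ≤ γ) (hΔt : 0 < Δt)
    (S : ℝ) (hS : IsLUB ((fun s : ℝ => s ^ (1 / γ) * G s) '' Set.Ici 0) S)
    (ninf N : ℝ) (hninf : ninf = PM ^ (1 / γ)) (hN : N = ninf + 4 * Δt * S)
    (n : ℕ → ℝ) (hnn : ∀ m, 0 ≤ n m) (h0 : n 0 ≤ N)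
    (hrec : ∀ m, n (m + 1) ≤ (3 / 4) * N + (1 / 4) * n m + Δt * n m * G (n m ^ γ)) :
    ∀ m, n m ≤ N := by
  intro m
  induction m with
  | zero => exact h0
  | succ m ih =>
    exact (hrec m).trans <| recursion_step_le hGanti hGPM (one_pos.trans_le hγ) hΔt.le hS
      (hninf ▸ hN) (hnn m) ih

/-- Scalar recursion of the discrete maximum principle: if
n^{m+1} ≤ (3/4)N + (1/4)n^m + Δt n^m G((n^m)^γ), with G decreasing, G(P_M) = 0,
N = n_∞ + 4Δt sup_{s≥0} s^{1/γ} G(s), n_∞ = P_M^{1/γ}, and n^0 ≤ N,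
then n^m ≤ N for all m. -/
theorem stmt7 (G : ℝ → ℝ) (hGanti : Antitone G)
    (PM : ℝ) (hPM : 0 < PM) (hGPM : G PM = 0)
    (γ Δt : ℝ) (hγ : 1 ≤ γ) (hΔt : 0 < Δt)
    (S : ℝ) (hS : IsLUB ((fun s : ℝ => s ^ (1 / γ) * G s) '' Set.Ici 0) S)
    (ninf N : ℝ) (hninf : ninf = PM ^ (1 / γ)) (hN : N = ninf + 4 * Δt * S)
    (n : ℕ → ℝ) (hnn : ∀ m, 0 ≤ n m) (h0 : n 0 ≤ N)
    (hrec : ∀ m, n (m + 1) ≤ (3 / 4) * N + (1 / 4) * n m + Δt * n m * G (n m ^ γ)) :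
    ∀ m, n m ≤ N :=
  stmt7_general G hGanti PM hGPM γ Δt hγ hΔt S hS ninf N hninf hN n hnn h0 hrec
end

section
/- Let W : {1,…,N}² → ℝ satisfy −μ Δ_h W + W = p with discrete homogeneous Neumann boundary conditions on a square grid with mesh h, where p_{ij} = |n_{ij}|^γ. Then μ² Σ_{ij} |∇_h² W_{ij}|² h² + 2μ Σ_{ij} |∇_h W_{ij}|² h² + Σ_{ij} |W_{ij}|² h² = Σ_{ij} |n_{ij}|^{2γ} h², where the discrete norms arise from summation by parts. -/
/-!
Squaring the equation gives `p² = μ²(Δ_h W)² - 2μ W Δ_h W + W²` pointwise. Summing over the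
periodic grid, summation by parts turns `∑ W Δ_h W` into `-∑ |∇_h W|²`, and, because the forward
and backward differences in different directions commute, `∑ D₁₁W D₂₂W` into `∑ (D₁₂W)²`; so
`∑ (Δ_h W)² = ∑ |∇_h² W|²` with the mixed derivative counted twice.
-/

open Finset

/-- Forward difference in the first index on a periodic grid. -/
noncomputable def D1p {N : ℕ} (h : ℝ) (f : ZMod N → ZMod N → ℝ) (i j : ZMod N) : ℝ :=
  (f (i + 1) j - f i j) / h

/-- Forward difference in the second index on a periodic grid. -/
noncomputable def D2p {N : ℕ} (h : ℝ) (f : ZMod N → ZMod N → ℝ) (i j : ZMod N) : ℝ :=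
  (f i (j + 1) - f i j) / h

/-- Backward difference in the first index on a periodic grid. -/
noncomputable def D1m {N : ℕ} (h : ℝ) (f : ZMod N → ZMod N → ℝ) (i j : ZMod N) : ℝ :=
  (f i j - f (i - 1) j) / h

/-- Backward difference in the second index on a periodic grid. -/
noncomputable def D2m {N : ℕ} (h : ℝ) (f : ZMod N → ZMod N → ℝ) (i j : ZMod N) : ℝ :=
  (f i j - f i (j - 1)) / h

section SummationByParts

variable {N : ℕ} [NeZero N] (h : ℝ)

theorem sum_D1m_mul (F G : ZMod N → ZMod N → ℝ) :
    ∑ i, ∑ j, D1m h F i j * G i j = -∑ i, ∑ j, F i j * D1p h G i j := by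
  have shift : ∑ i, ∑ j, F (i - 1) j * G i j = ∑ i, ∑ j, F i j * G (i + 1) j := by
    simpa using (Equiv.sum_comp (Equiv.addRight 1) fun i => ∑ j, F (i - 1) j * G i j).symm
  have lhs : ∀ i j, D1m h F i j * G i j = (F i j * G i j - F (i - 1) j * G i j) / h :=
    fun i j => by simp only [D1m]; ring
  have rhs : ∀ i j, F i j * D1p h G i j = (F i j * G (i + 1) j - F i j * G i j) / h :=
    fun i j => by simp only [D1p]; ring
  simp only [lhs, rhs, ← sum_div, sum_sub_distrib, shift]
  ring

theorem sum_D2m_mul (F G : ZMod N → ZMod N → ℝ) :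
    ∑ i, ∑ j, D2m h F i j * G i j = -∑ i, ∑ j, F i j * D2p h G i j := by
  have shift : ∀ i, ∑ j, F i (j - 1) * G i j = ∑ j, F i j * G i (j + 1) := fun i => by
    simpa using (Equiv.sum_comp (Equiv.addRight 1) fun j => F i (j - 1) * G i j).symm
  have lhs : ∀ i j, D2m h F i j * G i j = (F i j * G i j - F i (j - 1) * G i j) / h :=
    fun i j => by simp only [D2m]; ring
  have rhs : ∀ i j, F i j * D2p h G i j = (F i j * G i (j + 1) - F i j * G i j) / h :=
    fun i j => by simp only [D2p]; ring
  simp only [lhs, rhs, ← sum_div, sum_sub_distrib, shift]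
  ring

omit [NeZero N] in
theorem D1p_D2m_comm (f : ZMod N → ZMod N → ℝ) : D1p h (D2m h f) = D2m h (D1p h f) := by
  funext i j; simp only [D1p, D2m]; ring

omit [NeZero N] in
theorem D2p_D1p_comm (f : ZMod N → ZMod N → ℝ) : D2p h (D1p h f) = D1p h (D2p h f) := by
  funext i j; simp only [D1p, D2p]; ring

theorem sum_D1m_D1p_mul_self (W : ZMod N → ZMod N → ℝ) :
    ∑ i, ∑ j, D1m h (D1p h W) i j * W i j = -∑ i, ∑ j, D1p h W i j ^ 2 := by
  simp only [sum_D1m_mul, sq]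

theorem sum_D2m_D2p_mul_self (W : ZMod N → ZMod N → ℝ) :
    ∑ i, ∑ j, D2m h (D2p h W) i j * W i j = -∑ i, ∑ j, D2p h W i j ^ 2 := by
  simp only [sum_D2m_mul, sq]

theorem sum_D1m_D1p_mul_D2m_D2p (W : ZMod N → ZMod N → ℝ) :
    ∑ i, ∑ j, D1m h (D1p h W) i j * D2m h (D2p h W) i j = ∑ i, ∑ j, D1p h (D2p h W) i j ^ 2 := by
  calc ∑ i, ∑ j, D1m h (D1p h W) i j * D2m h (D2p h W) i j
      = -∑ i, ∑ j, D2m h (D1p h (D2p h W)) i j * D1p h W i j := by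
        simp only [sum_D1m_mul, D1p_D2m_comm, mul_comm]
    _ = ∑ i, ∑ j, D1p h (D2p h W) i j ^ 2 := by
        simp only [sum_D2m_mul, neg_neg, D2p_D1p_comm, sq]

end SummationByParts

theorem sum_sq_neg_mul_laplacian_add_self {N : ℕ} [NeZero N] (μ h : ℝ) (W : ZMod N → ZMod N → ℝ) :
    ∑ i, ∑ j, (-μ * (D1m h (D1p h W) i j + D2m h (D2p h W) i j) + W i j) ^ 2
      = μ ^ 2 * ∑ i, ∑ j,
          (D1m h (D1p h W) i j ^ 2 + D2m h (D2p h W) i j ^ 2 + 2 * D1p h (D2p h W) i j ^ 2)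
        + 2 * μ * ∑ i, ∑ j, (D1p h W i j ^ 2 + D2p h W i j ^ 2)
        + ∑ i, ∑ j, W i j ^ 2 := by
  have expand : ∀ a b w : ℝ, (-μ * (a + b) + w) ^ 2
      = μ ^ 2 * (a ^ 2 + b ^ 2 + 2 * (a * b)) - 2 * μ * (a * w + b * w) + w ^ 2 := by
    intros; ring
  simp only [expand, sum_add_distrib, sum_sub_distrib, ← mul_sum, sum_D1m_D1p_mul_self,
    sum_D2m_D2p_mul_self, sum_D1m_D1p_mul_D2m_D2p]
  ring

theorem stmt10_general (N : ℕ) [NeZero N] (μ h γ : ℝ)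
    (W n p : ZMod N → ZMod N → ℝ)
    (hp : ∀ i j, p i j = |n i j| ^ γ)
    (heq : ∀ i j, -μ * (D1m h (D1p h W) i j + D2m h (D2p h W) i j) + W i j = p i j) :
    μ ^ 2 * ∑ i : ZMod N, ∑ j : ZMod N,
        ((D1m h (D1p h W) i j) ^ 2 + (D2m h (D2p h W) i j) ^ 2
          + 2 * (D1p h (D2p h W) i j) ^ 2) * h ^ 2
      + 2 * μ * ∑ i : ZMod N, ∑ j : ZMod N,
          ((D1p h W i j) ^ 2 + (D2p h W i j) ^ 2) * h ^ 2
      + ∑ i : ZMod N, ∑ j : ZMod N, (W i j) ^ 2 * h ^ 2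
      = ∑ i : ZMod N, ∑ j : ZMod N, |n i j| ^ (2 * γ) * h ^ 2 := by
  have hpow : ∀ i j, |n i j| ^ (2 * γ) = p i j ^ 2 := fun i j => by
    rw [hp, mul_comm, Real.rpow_mul (abs_nonneg _), Real.rpow_two]
  simp only [hpow, ← heq, ← sum_mul, sum_sq_neg_mul_laplacian_add_self]
  ring

/-- Discrete H² energy identity for −μΔ_h W + W = p, p = |n|^γ, on a periodic grid:
μ² Σ|∇_h²W|² h² + 2μ Σ|∇_hW|² h² + Σ|W|² h² = Σ|n|^{2γ} h², where all the discrete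
norms arise from summation by parts. -/
theorem stmt10 (N : ℕ) [NeZero N] (μ h γ : ℝ) (hμ : 0 < μ) (hh : 0 < h) (hγ : 1 ≤ γ)
    (W n p : ZMod N → ZMod N → ℝ)
    (hp : ∀ i j, p i j = |n i j| ^ γ)
    (heq : ∀ i j, -μ * (D1m h (D1p h W) i j + D2m h (D2p h W) i j) + W i j = p i j) :
    μ ^ 2 * ∑ i : ZMod N, ∑ j : ZMod N,
        ((D1m h (D1p h W) i j) ^ 2 + (D2m h (D2p h W) i j) ^ 2
          + 2 * (D1p h (D2p h W) i j) ^ 2) * h ^ 2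
      + 2 * μ * ∑ i : ZMod N, ∑ j : ZMod N,
          ((D1p h W i j) ^ 2 + (D2p h W i j) ^ 2) * h ^ 2
      + ∑ i : ZMod N, ∑ j : ZMod N, (W i j) ^ 2 * h ^ 2
      = ∑ i : ZMod N, ∑ j : ZMod N, |n i j| ^ (2 * γ) * h ^ 2 :=
  stmt10_general N μ h γ W n p hp heq
end

section
/- Let g : [0,∞) → ℝ be continuous with g(s) ≤ 0 for s ≥ P_M and arbitrary for s < P_M, let γ ≥ 1, μ > 0, and suppose the C¹ function m : [0,T] → [0,∞) satisfies m'(t) ≤ m(t)g(m(t)^γ) + (1/μ)m(t)(m(t)^γ − M(t)) for all t where m(t)^γ ≤ M(t) ≤ max over time of m^γ. If m(0)^γ ≤ P_M then m(t)^γ ≤ P_M for all t ∈ [0,T]. -/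
/-! At every time where `m ^ γ ≥ P_M`, both terms of the differential inequality are nonpositive:
the first because `g ≤ 0` there, the second because `m ^ γ ≤ M`. So `m` cannot grow while it
lies above the level `P_M ^ (1 / γ)`, and starting below that level it stays below it. -/

open Set

theorem image_le_of_deriv_right_nonpos_above {u u' : ℝ → ℝ} {a b c : ℝ}
    (hu : ContinuousOn u (Icc a b)) (hu' : ∀ x ∈ Ico a b, HasDerivWithinAt u (u' x) (Ici x) x)
    (ha : u a ≤ c) (hdec : ∀ x ∈ Ico a b, c < u x → u' x ≤ 0) :
    ∀ x ∈ Icc a b, u x ≤ c := by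
  intro x hx
  -- Compare with the strictly increasing barriers `c + ε (t - a + 1)`, which `u` cannot touch.
  have barrier : ∀ ε > 0, u x ≤ c + ε * (x - a + 1) := by
    intro ε hε
    refine image_le_of_deriv_right_lt_deriv_boundary' (B := fun t => c + ε * (t - a + 1))
      (B' := fun _ => ε) hu hu' (by simp only [sub_self, zero_add, mul_one]; linarith)
      (by fun_prop) (fun t _ => ?_) (fun t ht hut => ?_) hx
    · simpa using ((hasDerivAt_id t).sub_const a |>.add_const 1 |>.const_mul ε
        |>.const_add c).hasDerivWithinAt
    · have : c < u t := by rw [hut]; nlinarith [ht.1]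
      linarith [hdec t ht this]
  refine le_of_forall_pos_le_add fun ε hε => ?_
  have hK : 0 < x - a + 1 := by linarith [hx.1]
  simpa [div_mul_cancel₀ _ hK.ne'] using barrier (ε / (x - a + 1)) (div_pos hε hK)

theorem stmt17_general (T PM μc γ : ℝ) (hPM : 0 < PM) (hμ : 0 < μc) (hγ : 1 ≤ γ)
    (g : ℝ → ℝ)
    (hg : ∀ s : ℝ, PM ≤ s → g s ≤ 0)
    (m m' M : ℝ → ℝ)
    (hm : ∀ t ∈ Set.Icc (0 : ℝ) T, HasDerivAt m (m' t) t)
    (hmnn : ∀ t ∈ Set.Icc (0 : ℝ) T, 0 ≤ m t)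
    (hMl : ∀ t ∈ Set.Icc (0 : ℝ) T, m t ^ γ ≤ M t)
    (hineq : ∀ t ∈ Set.Icc (0 : ℝ) T,
      m' t ≤ m t * g (m t ^ γ) + (1 / μc) * m t * (m t ^ γ - M t))
    (h0 : m 0 ^ γ ≤ PM) :
    ∀ t ∈ Set.Icc (0 : ℝ) T, m t ^ γ ≤ PM := by
  have hγ0 : 0 < γ := by linarith
  have hle_iff : ∀ t ∈ Icc 0 T, m t ^ γ ≤ PM ↔ m t ≤ PM ^ γ⁻¹ := fun t ht =>
    (Real.le_rpow_inv_iff_of_pos (hmnn t ht) hPM.le hγ0).symm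
  have hdec : ∀ t ∈ Ico 0 T, PM ^ γ⁻¹ < m t → m' t ≤ 0 := by
    intro t ht hlt
    have ht' := Ico_subset_Icc_self ht
    have hPMle : PM ≤ m t ^ γ :=
      ((Real.rpow_inv_lt_iff_of_pos hPM.le (hmnn t ht') hγ0).mp hlt).le
    have hreaction : m t * g (m t ^ γ) ≤ 0 :=
      mul_nonpos_of_nonneg_of_nonpos (hmnn t ht') (hg _ hPMle)
    have hrelax : (1 / μc) * m t * (m t ^ γ - M t) ≤ 0 :=
      mul_nonpos_of_nonneg_of_nonpos (by have := hmnn t ht'; positivity)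
        (sub_nonpos.mpr (hMl t ht'))
    linarith [hineq t ht']
  intro t ht
  have h0mem : (0 : ℝ) ∈ Icc 0 T := ⟨le_rfl, ht.1.trans ht.2⟩
  refine (hle_iff t ht).mpr <| image_le_of_deriv_right_nonpos_above
    (fun x hx => (hm x hx).continuousAt.continuousWithinAt)
    (fun x hx => (hm x (Ico_subset_Icc_self hx)).hasDerivWithinAt)
    ((hle_iff 0 h0mem).mp h0) hdec t ht

/-- ODE comparison bounding the maximal density: if g ≤ 0 on [P_M, ∞),
m'(t) ≤ m(t)g(m(t)^γ) + (1/μ)m(t)(m(t)^γ − M(t)) with m ≥ 0,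
m(t)^γ ≤ M(t) ≤ sup over [0,T] of m^γ, and m(0)^γ ≤ P_M,
then m(t)^γ ≤ P_M on [0,T]. -/
theorem stmt17 (T PM μc γ : ℝ) (hT : 0 < T) (hPM : 0 < PM) (hμ : 0 < μc) (hγ : 1 ≤ γ)
    (g : ℝ → ℝ) (hgc : ContinuousOn g (Set.Ici 0))
    (hg : ∀ s : ℝ, PM ≤ s → g s ≤ 0)
    (m m' M : ℝ → ℝ)
    (hm : ∀ t ∈ Set.Icc (0 : ℝ) T, HasDerivAt m (m' t) t)
    (hmnn : ∀ t ∈ Set.Icc (0 : ℝ) T, 0 ≤ m t)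
    (hMl : ∀ t ∈ Set.Icc (0 : ℝ) T, m t ^ γ ≤ M t)
    (hMu : ∀ t ∈ Set.Icc (0 : ℝ) T,
      M t ≤ sSup ((fun s => m s ^ γ) '' Set.Icc (0 : ℝ) T))
    (hineq : ∀ t ∈ Set.Icc (0 : ℝ) T,
      m' t ≤ m t * g (m t ^ γ) + (1 / μc) * m t * (m t ^ γ - M t))
    (h0 : m 0 ^ γ ≤ PM) :
    ∀ t ∈ Set.Icc (0 : ℝ) T, m t ^ γ ≤ PM :=
  stmt17_general T PM μc γ hPM hμ hγ g hg m m' M hm hmnn hMl hineq h0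
end
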